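/- Over ZMod 5 the identity E₁ = (E₂^2 * Ã^2 * T̃^4 * Ã^3 * T̃)^4 holds, where E₁ = !![1,0,0,1; 0,1,0,0; 0,0,1,0; 0,0,0,1] and E₂ = !![1,0,0,0; 0,1,0,1; 0,0,1,0; 0,0,0,1]. -/

import Mathlib

open Matrix

/-- The reduction mod 5 of `P⁻¹A⁻¹P`. -/
def Atil : Matrix (Fin 4) (Fin 4) (ZMod 5) :=
  !![1, 1, 0, 0; 0, 1, 1, 4; 0, 0, 1, 4; 0, 0, 0, 1]

/-- The reduction mod 5 of `P⁻¹T⁻¹P`. -/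
def Ttil : Matrix (Fin 4) (Fin 4) (ZMod 5) :=
  !![1, 0, 0, 0; 0, 1, 0, 0; 0, 0, 1, 1; 0, 0, 0, 1]

def E₁ : Matrix (Fin 4) (Fin 4) (ZMod 5) :=
  !![1, 0, 0, 1; 0, 1, 0, 0; 0, 0, 1, 0; 0, 0, 0, 1]

def E₂ : Matrix (Fin 4) (Fin 4) (ZMod 5) :=
  !![1, 0, 0, 0; 0, 1, 0, 1; 0, 0, 1, 0; 0, 0, 0, 1]

/-!
The word `E₂² Ã² T̃⁴ Ã³ T̃` is the elementary transvection `1 - e₀₃`. Powers of a transvection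
add up their coefficients, so its fourth power is `1 - 4 e₀₃`, which is `1 + e₀₃ = E₁` since
`-4 = 1` in `ZMod 5`.
-/

theorem Matrix.transvection_pow {n R : Type*} [Fintype n] [DecidableEq n] [CommRing R] {i j : n}
    (h : i ≠ j) (c : R) (k : ℕ) : transvection i j c ^ k = transvection i j (k * c) := by
  induction k with
  | zero => simp
  | succ k ih =>
    rw [pow_succ, ih, transvection_mul_transvection_same i j h, Nat.cast_succ, add_one_mul]

theorem E₁_eq : E₁ = (E₂ ^ 2 * Atil ^ 2 * Ttil ^ 4 * Atil ^ 3 * Ttil) ^ 4 := by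
  have hword : E₂ ^ 2 * Atil ^ 2 * Ttil ^ 4 * Atil ^ 3 * Ttil = transvection 0 3 (-1) := by
    decide
  have hE₁ : E₁ = transvection 0 3 1 := by decide
  rw [hword, transvection_pow (by decide), hE₁]
  decide
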